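/- Any density operator ρ of rank r on a finite-dimensional Hilbert space satisfies ‖ρ − σ‖₁ ≥ 2(1 − r/r₀) for every density operator σ with flat spectrum of rank r₀ > r (i.e., σ = Π/r₀ for a projection Π of rank r₀). -/

import Mathlib

open Matrix
open scoped ComplexOrder

/-- The trace norm (sum of singular values) of a complex square matrix. -/
noncomputable def traceNorm {ι : Type*} [Fintype ι] [DecidableEq ι]
    (A : Matrix ι ι ℂ) : ℝ :=
  (((Matrix.posSemidef_conjTranspose_mul_self A).1.eigenvectorUnitary : Matrix ι ι ℂ) *
    diagonal (((↑) : ℝ → ℂ) ∘ (fun x => Real.sqrt x) ∘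
      (Matrix.posSemidef_conjTranspose_mul_self A).1.eigenvalues) *
    (star (Matrix.posSemidef_conjTranspose_mul_self A).1.eigenvectorUnitary : Matrix ι ι ℂ)).trace.re


/-! Put `A = ρ - P / r₀` and let `Q` be the support projection of `ρ`. Splitting `A = A⁺ - A⁻`,
`‖A‖₁ + tr A - 2 Re tr (A Q) = 2 Re tr (A⁺ (1 - Q)) + 2 Re tr (A⁻ Q) ≥ 0`, since the trace of a
product of positive matrices is nonnegative. Here `tr A = 0` and `tr (ρ Q) = 1`, while
`tr (P Q) ≤ tr Q = rank ρ ≤ r` because `P ≤ 1`; hence `‖A‖₁ ≥ 2 Re tr (A Q) ≥ 2 (1 - r / r₀)`. -/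

open scoped MatrixOrder

namespace Matrix

variable {n 𝕜 : Type*} [Fintype n] [DecidableEq n] [RCLike 𝕜]

lemma trace_eq_rank_of_isIdempotentElem {K : Type*} [Field K] {P : Matrix n n K}
    (hP : IsIdempotentElem P) : P.trace = P.rank := by
  have hP' : IsIdempotentElem (toLin' P) := hP.map toLinAlgEquiv'
  rw [← trace_toLin'_eq, (LinearMap.IsIdempotentElem.isProj_range _ hP').trace]
  rfl

lemma trace_mul_nonneg {A B : Matrix n n 𝕜} (hA : 0 ≤ A) (hB : 0 ≤ B) :
    0 ≤ (A * B).trace := by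
  have h : (A * B).trace = (CFC.sqrt B * A * CFC.sqrt B).trace := by
    rw [← trace_mul_cycle, mul_assoc, CFC.sqrt_mul_sqrt_self B hB]
  rw [h]
  exact (IsSelfAdjoint.conjugate_nonneg hA (CFC.sqrt_nonneg B).isSelfAdjoint).posSemidef.trace_nonneg

lemma IsHermitian.trace_cfc {A : Matrix n n 𝕜} (hA : A.IsHermitian) (f : ℝ → ℝ) :
    (cfc f A).trace = ∑ i, (f (hA.eigenvalues i) : 𝕜) := by
  rw [hA.cfc_eq, IsHermitian.cfc, trace_map', trace_diagonal]
  rfl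

noncomputable def supportProj (A : Matrix n n 𝕜) : Matrix n n 𝕜 :=
  cfc (fun x : ℝ => if x = 0 then 0 else 1) A

lemma supportProj_nonneg (A : Matrix n n 𝕜) : 0 ≤ supportProj A :=
  cfc_nonneg fun x _ => by split_ifs <;> norm_num

lemma supportProj_le_one (A : Matrix n n 𝕜) : supportProj A ≤ 1 :=
  cfc_le_one _ _ fun x _ => by split_ifs <;> norm_num

lemma IsHermitian.mul_supportProj {A : Matrix n n 𝕜} (hA : A.IsHermitian) :
    A * supportProj A = A := by
  have hcont (f : ℝ → ℝ) : ContinuousOn f (spectrum ℝ A) := by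
    rw [continuousOn_iff_continuous_domRestrict]
    fun_prop
  nth_rewrite 1 [← cfc_id' ℝ A]
  rw [supportProj, ← cfc_mul _ _ A (hcont _) (hcont _)]
  refine (cfc_congr fun x _ => ?_).trans (cfc_id' ℝ A)
  by_cases hx : x = 0 <;> simp [hx]

lemma IsHermitian.trace_supportProj {A : Matrix n n 𝕜} (hA : A.IsHermitian) :
    (supportProj A).trace = A.rank := by
  simp [supportProj, hA.trace_cfc, hA.rank_eq_card_non_zero_eigs, Fintype.card_subtype,
    Finset.sum_ite]

lemma traceNorm_eq_re_trace_abs (A : Matrix n n ℂ) : traceNorm A = (CFC.abs A).trace.re := by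
  have hB := posSemidef_conjTranspose_mul_self A
  have h : traceNorm A = (hB.1.cfc Real.sqrt).trace.re := rfl
  rw [h, ← hB.1.cfc_eq, CFC.abs, star_eq_conjTranspose, CFC.sqrt_eq_real_sqrt _ hB.nonneg,
    cfcₙ_eq_cfc]

lemma IsHermitian.two_mul_re_trace_mul_le_traceNorm_add {A Q : Matrix n n ℂ} (hA : A.IsHermitian)
    (hQ₀ : 0 ≤ Q) (hQ₁ : Q ≤ 1) : 2 * (A * Q).trace.re ≤ traceNorm A + A.trace.re := by
  have hpos := Complex.nonneg_iff.1 <| trace_mul_nonneg (CFC.posPart_nonneg A) (sub_nonneg.2 hQ₁)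
  have hneg := Complex.nonneg_iff.1 <| trace_mul_nonneg (CFC.negPart_nonneg A) hQ₀
  have hsplit := CFC.posPart_sub_negPart A hA.isSelfAdjoint
  have hAQ : A * Q = A⁺ * Q - A⁻ * Q := by rw [← sub_mul, hsplit]
  have htr : A.trace = A⁺.trace - A⁻.trace := by rw [← trace_sub, hsplit]
  rw [traceNorm_eq_re_trace_abs, ← CFC.posPart_add_negPart A hA.isSelfAdjoint, hAQ, htr]
  simp only [mul_sub, mul_one, trace_sub, trace_add, Complex.sub_re, Complex.add_re] at hpos ⊢
  linarith [hpos.1, hneg.1]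

end Matrix

/-- A density operator of rank at most `r` is at trace distance at least
`2(1 − r/r₀)` from any state with flat spectrum of rank `r₀ > r`, i.e. from
`σ = Π/r₀` for a projection `Π` of rank `r₀`. -/
theorem traceNorm_low_rank_sub_flat_ge {N : ℕ} (ρ P : Matrix (Fin N) (Fin N) ℂ)
    (r r₀ : ℕ) (hρ : ρ.PosSemidef) (hρtr : ρ.trace = 1) (hρrank : ρ.rank ≤ r)
    (hP : Pᴴ = P ∧ P * P = P) (hPrank : P.rank = r₀) (hr : r < r₀) :
    2 * (1 - (r : ℝ) / r₀) ≤ traceNorm (ρ - ((r₀ : ℂ)⁻¹ • P)) := by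
  have hr₀ : (r₀ : ℂ) ≠ 0 := Nat.cast_ne_zero.2 ((Nat.zero_le r).trans_lt hr).ne'
  have hPproj : IsStarProjection P := ⟨hP.2, hP.1⟩
  set Q := supportProj ρ
  set A := ρ - (r₀ : ℂ)⁻¹ • P
  have hA : A.IsHermitian :=
    hρ.1.isSelfAdjoint.sub ((IsSelfAdjoint.natCast r₀).inv₀.smul hPproj.isSelfAdjoint)
  have htrA : A.trace = 0 := by
    simp [A, hρtr, trace_eq_rank_of_isIdempotentElem hP.2, hPrank, hr₀]
  have hPQ : (P * Q).trace.re ≤ r := by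
    have h := Complex.nonneg_iff.1 (trace_mul_nonneg (supportProj_nonneg ρ) hPproj.one_sub_nonneg)
    rw [mul_sub, mul_one, trace_sub, trace_mul_comm Q P, hρ.1.trace_supportProj,
      Complex.sub_re] at h
    have : (ρ.rank : ℂ).re ≤ r := by simpa using hρrank
    linarith [h.1]
  have hAQ : (A * Q).trace.re = 1 - (r₀ : ℝ)⁻¹ * (P * Q).trace.re := by
    simp [A, Q, sub_mul, hρ.1.mul_supportProj, hρtr]
  calc 2 * (1 - (r : ℝ) / r₀) ≤ 2 * (A * Q).trace.re := by
        rw [hAQ, div_eq_inv_mul]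
        gcongr
    _ ≤ traceNorm A := by
        simpa [htrA] using
          hA.two_mul_re_trace_mul_le_traceNorm_add (supportProj_nonneg ρ) (supportProj_le_one ρ)
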